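/- Let (Ω, 𝒜, μ) be a probability space, Y : Ω → ℝ a measurable function with 0 ≤ Y ≤ 1 pointwise, and A, B measurable sets with 0 < μ(A) and 0 < μ(B). For a measurable set E with μ(E) > 0 write E[Y|E] := (∫_E Y dμ)/μ(E). Then |E[Y|A] − E[Y|B]| ≤ max{μ(A\B)/μ(A), μ(B\A)/μ(B)}. -/

import Mathlib

open MeasureTheory

lemma aux_real_bound (m s t i ra rb : ℝ) (hi : 0 ≤ i)
    (hm0 : 0 ≤ m) (hmi : m ≤ i) (hs : s ≤ ra) (ht : 0 ≤ t)
    (hra : 0 ≤ ra) (hrb : 0 ≤ rb) (ha : 0 < i + ra) (hb : 0 < i + rb) :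
    (m + s) / (i + ra) - (m + t) / (i + rb)
      ≤ max (ra / (i + ra)) (rb / (i + rb)) := by
  rcases le_total rb ra with h | h
  · refine le_trans ?_ (le_max_left _ _)
    have key : (m + s) * (i + rb) - (m + t) * (i + ra) ≤ ra * (i + rb) := by
      nlinarith [mul_nonneg hm0 (sub_nonneg.2 h),
        mul_le_mul_of_nonneg_right hs hi,
        mul_le_mul_of_nonneg_right hs hrb,
        mul_nonneg ht ha.le]
    rw [div_sub_div _ _ ha.ne' hb.ne', div_le_div_iff₀ (mul_pos ha hb) ha]
    nlinarith [mul_le_mul_of_nonneg_right key ha.le]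
  · refine le_trans ?_ (le_max_right _ _)
    have key : (m + s) * (i + rb) - (m + t) * (i + ra) ≤ rb * (i + ra) := by
      nlinarith [mul_le_mul_of_nonneg_right hmi (sub_nonneg.2 h),
        mul_le_mul_of_nonneg_right hs hb.le,
        mul_nonneg ht ha.le]
    rw [div_sub_div _ _ ha.ne' hb.ne', div_le_div_iff₀ (mul_pos ha hb) hb]
    nlinarith [mul_le_mul_of_nonneg_right key hb.le]

/-- Measure-theoretic intermediate bound in the proof of Proposition 1:
`|E[Y|A] − E[Y|B]| ≤ max{μ(A\B)/μ(A), μ(B\A)/μ(B)}`. -/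
theorem condMean_diff_le_max_relative_symmdiff
    {Ω : Type*} [MeasurableSpace Ω] (μ : Measure Ω) [IsProbabilityMeasure μ]
    (Y : Ω → ℝ) (hYmeas : Measurable Y)
    (hY0 : ∀ ω, 0 ≤ Y ω) (hY1 : ∀ ω, Y ω ≤ 1)
    (A B : Set Ω) (hA : MeasurableSet A) (hB : MeasurableSet B)
    (hA0 : 0 < μ A) (hB0 : 0 < μ B) :
    |(∫ ω in A, Y ω ∂μ) / (μ A).toReal - (∫ ω in B, Y ω ∂μ) / (μ B).toReal|
    ≤ max ((μ (A \ B)).toReal / (μ A).toReal) ((μ (B \ A)).toReal / (μ B).toReal) := by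
  have hint : Integrable Y μ := by
    refine (integrable_const (1 : ℝ)).mono' hYmeas.aestronglyMeasurable ?_
    filter_upwards with ω
    rw [Real.norm_eq_abs, abs_le]
    exact ⟨by linarith [hY0 ω], hY1 ω⟩
  -- measure decompositions
  have hμA : μ (A ∩ B) + μ (A \ B) = μ A := measure_inter_add_diff A hB
  have hμB : μ (B ∩ A) + μ (B \ A) = μ B := measure_inter_add_diff B hA
  have fin : ∀ s : Set Ω, μ s ≠ ⊤ := fun s => measure_ne_top μ s
  set i := (μ (A ∩ B)).toReal with hi
  set ra := (μ (A \ B)).toReal with hra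
  set rb := (μ (B \ A)).toReal with hrb
  have hiAB : (μ A).toReal = i + ra := by
    rw [← hμA, ENNReal.toReal_add (fin _) (fin _)]
  have hiBA : (μ B).toReal = i + rb := by
    rw [← hμB, ENNReal.toReal_add (fin _) (fin _), Set.inter_comm]
  have ha : 0 < i + ra := by
    rw [← hiAB]; exact ENNReal.toReal_pos hA0.ne' (fin _)
  have hb : 0 < i + rb := by
    rw [← hiBA]; exact ENNReal.toReal_pos hB0.ne' (fin _)
  -- integral decompositions
  have hIA : ∫ ω in A, Y ω ∂μ = (∫ ω in A ∩ B, Y ω ∂μ) + ∫ ω in A \ B, Y ω ∂μ :=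
    (integral_inter_add_diff hB hint.integrableOn).symm
  have hIB : ∫ ω in B, Y ω ∂μ = (∫ ω in A ∩ B, Y ω ∂μ) + ∫ ω in B \ A, Y ω ∂μ := by
    rw [← integral_inter_add_diff hA hint.integrableOn, Set.inter_comm]
  set m := ∫ ω in A ∩ B, Y ω ∂μ with hm
  set s := ∫ ω in A \ B, Y ω ∂μ with hs
  set t := ∫ ω in B \ A, Y ω ∂μ with ht
  have hbound : ∀ E : Set Ω, MeasurableSet E → ∫ ω in E, Y ω ∂μ ≤ (μ E).toReal := by
    intro E hE
    calc ∫ ω in E, Y ω ∂μ ≤ ∫ _ in E, (1 : ℝ) ∂μ := by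
          refine setIntegral_mono_on hint.integrableOn (integrable_const 1).integrableOn hE ?_
          exact fun ω _ => hY1 ω
      _ = (μ E).toReal := by simp [Measure.real]
  have hnn : ∀ E : Set Ω, MeasurableSet E → 0 ≤ ∫ ω in E, Y ω ∂μ :=
    fun E hE => setIntegral_nonneg hE fun ω _ => hY0 ω
  have h0i : (0:ℝ) ≤ i := ENNReal.toReal_nonneg
  have h0ra : (0:ℝ) ≤ ra := ENNReal.toReal_nonneg
  have h0rb : (0:ℝ) ≤ rb := ENNReal.toReal_nonneg
  have hm0 : 0 ≤ m := hnn _ (hA.inter hB)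
  have hmi : m ≤ i := hbound _ (hA.inter hB)
  have hs1 : s ≤ ra := hbound _ (hA.diff hB)
  have hs0 : 0 ≤ s := hnn _ (hA.diff hB)
  have ht1 : t ≤ rb := hbound _ (hB.diff hA)
  have ht0 : 0 ≤ t := hnn _ (hB.diff hA)
  rw [hIA, hIB, hiAB, hiBA, abs_sub_le_iff]
  constructor
  · exact aux_real_bound m s t i ra rb h0i hm0 hmi hs1 ht0 h0ra h0rb ha hb
  · rw [max_comm]
    exact aux_real_bound m t s i rb ra h0i hm0 hmi ht1 hs0 h0rb h0ra hb ha
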